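/- Let h19+ be the Lie algebra with basis e1,...,e6 and nonzero brackets [e2,e3]=e4, [e2,e1]=e5, [e1,e4]=e6, [e3,e5]=e6 (the standard basis (0,0,0,23,21,14+35)). If φ is an automorphism of h19+ with φ(e1) = β1 e1 + β3 e3 + β4 e4 + β5 e5 + β6 e6 and φ(e2) = γ2 e2 + γ4 e4 + γ5 e5 + γ6 e6 with γ2 ≠ 0, then β1 β3 = 0. -/
import Mathlib


open Submodule

abbrev V6 : Type := Fin 6 → ℝ

def e (i : Fin 6) : V6 := Pi.single i 1

/-- Bracket of h19+ (standard basis (0,0,0,23,21,14+35)): [e2,e3]=e4, [e2,e1]=e5,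
[e1,e4]=e6, [e3,e5]=e6. -/
def br (x y : V6) : V6 :=
  ![0, 0, 0, x 1 * y 2 - x 2 * y 1, x 1 * y 0 - x 0 * y 1,
    x 0 * y 3 - x 3 * y 0 + (x 2 * y 4 - x 4 * y 2)]

theorem h19p_aut_relation (φ : V6 ≃ₗ[ℝ] V6)
    (haut : ∀ x y, φ (br x y) = br (φ x) (φ y))
    (β1 β3 β4 β5 β6 γ2 γ4 γ5 γ6 : ℝ)
    (h1 : φ (e 0) = β1 • e 0 + β3 • e 2 + β4 • e 3 + β5 • e 4 + β6 • e 5)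
    (h2 : φ (e 1) = γ2 • e 1 + γ4 • e 3 + γ5 • e 4 + γ6 • e 5)
    (hγ : γ2 ≠ 0) :
    β1 * β3 = 0 := by
  have h := haut (e 0) (br (e 0) (e 1))
  rw [haut (e 0) (e 1), h1, h2] at h
  have hz : br (e 0) (br (e 0) (e 1)) = 0 := by
    funext i; fin_cases i <;>
      simp (config := {decide := true}) [br, e, Pi.single, Function.update,
        Matrix.cons_val_succ, Matrix.cons_val_zero] <;> rfl
  rw [hz, map_zero] at h
  have key := congrFun h.symm 5
  simp (config := {decide := true}) [br, e, Pi.single, Pi.add_apply, Pi.smul_apply,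
    Matrix.cons_val_succ, Matrix.cons_val_zero, smul_eq_mul, Pi.zero_apply,
    Function.update] at key
  ring_nf at key
  have hk0 : -(β1 * β3 * γ2 * 2) = 0 := key
  have hk : β1 * β3 * γ2 = 0 := by linarith
  rcases mul_eq_zero.mp hk with h' | h'
  · exact h'
  · exact absurd h' hγ
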